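/- arXiv:2010.15404 — 3 statements merged into one kernel-verified Lean document; each statement's English description precedes it below -/
import Mathlib

section
/- For every slot j ∈ {1,…,m}, every finite set S ⊆ {1,…,m}, and every slot e ∈ {1,…,m} with e ∉ S, one has p^{S ∩ {e}}(j) + p^{S ∪ {e}}(j) ≤ p^S(j) + p^{{e}}(j) (note that S ∩ {e} = ∅ since e ∉ S). -/
/-- Temporal distance between slots `j` and `e`. -/
def tdist (j e : ℕ) : ℕ := ((j : ℤ) - (e : ℤ)).natAbs

/-- Padded `k`-NN distance sum `I_k^S(j)`. -/
def Ik (m k : ℕ) (S : Finset ℕ) (j : ℕ) : ℕ :=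
  if k ≤ S.card then
    (((S.val.map (fun e => tdist j e)).sort (· ≤ ·)).take k).sum
  else
    (S.val.map (fun e => tdist j e)).sum + (k - S.card) * m

/-- Interpolation error ratio `ρ^S(j)`. -/
noncomputable def rho (m k : ℕ) (S : Finset ℕ) (j : ℕ) : ℝ :=
  if j ∈ S then 0 else (Ik m k S j : ℝ) / ((k : ℝ) * (m : ℝ))

/-- Subtask finishing probability `p^S(j)`. -/
noncomputable def prob (m k : ℕ) (S : Finset ℕ) (j : ℕ) : ℝ :=
  (1 / (m : ℝ)) * (1 - rho m k S j)

/-- Task quality `q(S)` (note `Real.logb 2 0 = 0`, so the convention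
`0 · log₂ 0 = 0` holds definitionally). -/
noncomputable def quality (m k : ℕ) (S : Finset ℕ) : ℝ :=
  ∑ j ∈ Finset.Icc 1 m, -(prob m k S j * Real.logb 2 (prob m k S j))


/-! Missing neighbours count at the maximal distance `m`, so `I_k^S(j)` is the sum of the `k`
smallest elements of the distance multiset of `S` padded with `k` copies of `m`. Inserting one more
element `d ≤ m` into a multiset of elements `≤ m` lowers the sum of its `k` smallest elements by at
most `m - d`. For a new slot `e` this gives `I_k^S(j) + I_k^{{e}}(j) ≤ k m + I_k^{S ∪ {e}}(j)`,
because `I_k^{{e}}(j) = |j - e| + (k - 1) m`; dividing by `k m` and using `p^∅(j) = 0` yields the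
inequality. The cases `j ∈ S` and `j = e` only need `0 ≤ ρ ≤ 1`. -/

lemma List.sum_take_succ_le_add {m : ℕ} {L : List ℕ} (hL : ∀ x ∈ L, x ≤ m) (n : ℕ) :
    (L.take (n + 1)).sum ≤ (L.take n).sum + m := by
  rcases lt_or_ge n L.length with hn | hn
  · rw [List.sum_take_succ L n hn]
    exact Nat.add_le_add_left (hL _ (L.getElem_mem hn)) _
  · rw [List.take_of_length_le hn, List.take_of_length_le (by omega)]
    omega

lemma List.sum_take_add_le_sum_take_orderedInsert {m d : ℕ} (hd : d ≤ m) {L : List ℕ}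
    (hL : ∀ x ∈ L, x ≤ m) (k : ℕ) :
    (L.take k).sum + d ≤ m + ((L.orderedInsert (· ≤ ·) d).take k).sum := by
  induction L generalizing k with
  | nil => cases k <;> simp [hd]
  | cons a L ih =>
    have hL' : ∀ x ∈ L, x ≤ m := fun x hx => hL x (List.mem_cons_of_mem a hx)
    cases k with
    | zero => simpa using hd
    | succ k =>
      by_cases hda : d ≤ a
      · have := List.sum_take_succ_le_add hL k
        simp only [List.orderedInsert_cons, if_pos hda, List.take_succ_cons, List.sum_cons] at this ⊢
        omega
      · simp only [List.orderedInsert_cons, if_neg hda, List.take_succ_cons, List.sum_cons]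
        have := ih hL' k
        omega

lemma Multiset.sort_cons_eq_orderedInsert (d : ℕ) (M : Multiset ℕ) :
    (d ::ₘ M).sort (· ≤ ·) = (M.sort (· ≤ ·)).orderedInsert (· ≤ ·) d := by
  refine List.Perm.eq_of_pairwise' (Multiset.pairwise_sort _ _)
    ((Multiset.pairwise_sort _ _).orderedInsert d _) ?_
  refine List.Perm.trans ?_ (List.perm_orderedInsert _ d _).symm
  rw [← Multiset.coe_eq_coe, Multiset.sort_eq, ← Multiset.cons_coe, Multiset.sort_eq]

lemma Multiset.sort_add_replicate {m : ℕ} {M : Multiset ℕ} (hM : ∀ x ∈ M, x ≤ m) (n : ℕ) :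
    (M + Multiset.replicate n m).sort (· ≤ ·) = M.sort (· ≤ ·) ++ List.replicate n m := by
  refine List.Perm.eq_of_pairwise' (Multiset.pairwise_sort _ _)
    (List.pairwise_append.2 ⟨Multiset.pairwise_sort _ _, ?_, ?_⟩) ?_
  · exact List.pairwise_replicate.2 (Or.inr le_rfl)
  · intro a ha b hb
    rw [List.eq_of_mem_replicate hb]
    exact hM a ((Multiset.mem_sort _).1 ha)
  · rw [← Multiset.coe_eq_coe, Multiset.sort_eq, ← Multiset.coe_add, Multiset.sort_eq,
      Multiset.coe_replicate]

def sumSmallest (k : ℕ) (M : Multiset ℕ) : ℕ :=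
  ((M.sort (· ≤ ·)).take k).sum

lemma sumSmallest_add_le_sumSmallest_cons {m d : ℕ} (hd : d ≤ m) {M : Multiset ℕ}
    (hM : ∀ x ∈ M, x ≤ m) (k : ℕ) :
    sumSmallest k M + d ≤ m + sumSmallest k (d ::ₘ M) := by
  rw [sumSmallest, sumSmallest, Multiset.sort_cons_eq_orderedInsert]
  exact List.sum_take_add_le_sum_take_orderedInsert hd
    (fun x hx => hM x ((Multiset.mem_sort _).1 hx)) k

lemma sumSmallest_le {m : ℕ} {M : Multiset ℕ} (hM : ∀ x ∈ M, x ≤ m) (k : ℕ) :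
    sumSmallest k M ≤ k * m := by
  calc sumSmallest k M ≤ ((M.sort (· ≤ ·)).take k).length • m :=
        List.sum_le_card_nsmul _ _
          fun x hx => hM x ((Multiset.mem_sort _).1 (List.mem_of_mem_take hx))
    _ ≤ k * m := Nat.mul_le_mul_right m (List.length_take_le _ _)

lemma sumSmallest_add_replicate {m : ℕ} {M : Multiset ℕ} (hM : ∀ x ∈ M, x ≤ m) (k : ℕ) :
    sumSmallest k (M + Multiset.replicate k m) =
      if k ≤ M.card then sumSmallest k M else M.sum + (k - M.card) * m := by
  rw [sumSmallest, Multiset.sort_add_replicate hM, List.take_append, List.sum_append,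
    Multiset.length_sort]
  split_ifs with hk
  · simp [sumSmallest, Nat.sub_eq_zero_of_le hk]
  · rw [List.take_of_length_le (by rw [Multiset.length_sort]; omega), List.take_replicate,
      List.sum_replicate, smul_eq_mul, min_eq_left (Nat.sub_le k _),
      ← Multiset.sum_coe, Multiset.sort_eq]

lemma tdist_le_of_mem_Icc {m j e : ℕ} (hj : j ∈ Finset.Icc 1 m) (he : e ∈ Finset.Icc 1 m) :
    tdist j e ≤ m := by
  rw [Finset.mem_Icc] at hj he
  unfold tdist
  omega

section Interpolation

variable {m k j : ℕ} {S : Finset ℕ}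

def paddedDists (m k : ℕ) (S : Finset ℕ) (j : ℕ) : Multiset ℕ :=
  S.val.map (fun e => tdist j e) + Multiset.replicate k m

lemma paddedDists_insert {e : ℕ} (heS : e ∉ S) :
    paddedDists m k (insert e S) j = tdist j e ::ₘ paddedDists m k S j := by
  rw [paddedDists, paddedDists, Finset.insert_val_of_notMem heS, Multiset.map_cons,
    Multiset.cons_add]

lemma le_of_mem_paddedDists (hS : ∀ e ∈ S, tdist j e ≤ m) :
    ∀ x ∈ paddedDists m k S j, x ≤ m := by
  intro x hx
  rcases Multiset.mem_add.1 hx with hx | hx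
  · obtain ⟨e, he, rfl⟩ := Multiset.mem_map.1 hx
    exact hS e he
  · exact (Multiset.eq_of_mem_replicate hx).le

lemma Ik_eq_sumSmallest (hS : ∀ e ∈ S, tdist j e ≤ m) :
    Ik m k S j = sumSmallest k (paddedDists m k S j) := by
  rw [paddedDists, sumSmallest_add_replicate, Multiset.card_map, Ik, sumSmallest]
  · rfl
  · simpa using hS

lemma Ik_empty : Ik m k ∅ j = k * m := by
  rcases Nat.eq_zero_or_pos k with rfl | hk
  · simp [Ik]
  · simp [Ik, Nat.not_le_of_lt hk]

lemma Ik_singleton (hk : 1 ≤ k) (e : ℕ) : Ik m k {e} j = tdist j e + (k - 1) * m := by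
  rcases hk.eq_or_lt with rfl | hk
  · simp [Ik]
  · simp [Ik, Nat.not_le_of_lt hk]

lemma Ik_le (hS : ∀ e ∈ S, tdist j e ≤ m) : Ik m k S j ≤ k * m := by
  rw [Ik_eq_sumSmallest hS]
  exact sumSmallest_le (le_of_mem_paddedDists hS) k

lemma Ik_add_le_Ik_insert (hS : ∀ e ∈ S, tdist j e ≤ m) {e : ℕ} (he : tdist j e ≤ m)
    (heS : e ∉ S) : Ik m k S j + tdist j e ≤ m + Ik m k (insert e S) j := by
  have hS' : ∀ x ∈ insert e S, tdist j x ≤ m := Finset.forall_mem_insert _ _ _ |>.2 ⟨he, hS⟩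
  rw [Ik_eq_sumSmallest hS, Ik_eq_sumSmallest hS', paddedDists_insert heS]
  exact sumSmallest_add_le_sumSmallest_cons he (le_of_mem_paddedDists hS) k

end Interpolation

lemma rho_nonneg (m k : ℕ) (S : Finset ℕ) (j : ℕ) : 0 ≤ rho m k S j := by
  unfold rho
  split_ifs <;> positivity

lemma rho_le_one {m k j : ℕ} {S : Finset ℕ} (hS : ∀ e ∈ S, tdist j e ≤ m) : rho m k S j ≤ 1 := by
  unfold rho
  split_ifs
  · exact zero_le_one
  · exact div_le_one_of_le₀ (by exact_mod_cast Ik_le hS) (by positivity)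

lemma rho_add_rho_singleton_le {m k j e : ℕ} {S : Finset ℕ} (hm : 0 < m) (hk : 1 ≤ k)
    (hS : ∀ x ∈ S, tdist j x ≤ m) (he : tdist j e ≤ m) (heS : e ∉ S) :
    rho m k S j + rho m k {e} j ≤ 1 + rho m k (insert e S) j := by
  have he' : ∀ x ∈ ({e} : Finset ℕ), tdist j x ≤ m := by simpa using he
  by_cases hjS : j ∈ S
  · rw [rho, if_pos hjS, zero_add]
    linarith [rho_le_one (k := k) he', rho_nonneg m k (insert e S) j]
  by_cases hje : j = e
  · subst hje
    simp only [rho, Finset.mem_singleton, Finset.mem_insert, true_or, if_true, add_zero]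
    exact rho_le_one hS
  have hjins : j ∉ insert e S := by simp [hje, hjS]
  rw [rho, if_neg hjS, rho, if_neg (by simpa using hje), rho, if_neg hjins]
  have hkm : (0 : ℝ) < k * m := by positivity
  have hIk : Ik m k S j + Ik m k {e} j ≤ k * m + Ik m k (insert e S) j := by
    have := Ik_add_le_Ik_insert (k := k) hS he heS
    rw [Ik_singleton hk]
    obtain ⟨k, rfl⟩ := Nat.exists_eq_add_of_le' hk
    rw [Nat.add_sub_cancel, Nat.succ_mul]
    omega
  rw [← add_div, one_add_div hkm.ne', div_le_div_iff_of_pos_right hkm]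
  exact_mod_cast hIk

lemma prob_empty {m k : ℕ} (hk : 1 ≤ k) (j : ℕ) : prob m k ∅ j = 0 := by
  rcases Nat.eq_zero_or_pos m with rfl | hm
  · simp [prob]
  · have hkm : (k : ℝ) * m ≠ 0 := by positivity
    simp [prob, rho, Ik_empty, hkm]

theorem prob_submodular_single_general (m k : ℕ) (hk : 1 ≤ k)
    (j : ℕ) (hj : j ∈ Finset.Icc 1 m)
    (S : Finset ℕ) (hS : S ⊆ Finset.Icc 1 m)
    (e : ℕ) (he : e ∈ Finset.Icc 1 m) (heS : e ∉ S) :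
    prob m k (S ∩ {e}) j + prob m k (S ∪ {e}) j ≤ prob m k S j + prob m k {e} j := by
  have hdist : ∀ x ∈ Finset.Icc 1 m, tdist j x ≤ m := fun x hx => tdist_le_of_mem_Icc hj hx
  have hm : 0 < m := (Finset.mem_Icc.1 hj).1.trans (Finset.mem_Icc.1 hj).2
  have hrho := rho_add_rho_singleton_le hm hk (fun x hx => hdist x (hS hx)) (hdist e he) heS
  rw [Finset.inter_singleton_of_notMem heS, Finset.union_singleton, prob_empty hk, zero_add]
  unfold prob
  rw [← mul_add]
  gcongr
  linarith

/-- Single-element submodularity inequality for the finishing probability. -/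
theorem prob_submodular_single (m k : ℕ) (hm : 2 ≤ m) (hk : 1 ≤ k)
    (j : ℕ) (hj : j ∈ Finset.Icc 1 m)
    (S : Finset ℕ) (hS : S ⊆ Finset.Icc 1 m)
    (e : ℕ) (he : e ∈ Finset.Icc 1 m) (heS : e ∉ S) :
    prob m k (S ∩ {e}) j + prob m k (S ∪ {e}) j ≤ prob m k S j + prob m k {e} j :=
  prob_submodular_single_general m k hk j hj S hS e he heS
end

section
/- If m ≥ 3, then the summation quality q_sum is non-decreasing and submodular as a set function on finite subsets of {1,…,N} × {1,…,m}: for all S ⊆ T, q_sum(S) ≤ q_sum(T), and for all X, Y, q_sum(X ∩ Y) + q_sum(X ∪ Y) ≤ q_sum(X) + q_sum(Y). -/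
/-- The set of slots assigned within task `i`. -/
def taskSlice (S : Finset (ℕ × ℕ)) (i : ℕ) : Finset ℕ :=
  (S.filter (fun x => x.1 = i)).image Prod.snd

/-- The summation quality `q_sum`. -/
noncomputable def qsum (m k N : ℕ) (S : Finset (ℕ × ℕ)) : ℝ :=
  ∑ i ∈ Finset.Icc 1 N, quality m k (taskSlice S i)

/-- The minimum quality `q_min`. -/
noncomputable def qmin (m k N : ℕ) (hN : 1 ≤ N) (S : Finset (ℕ × ℕ)) : ℝ :=
  (Finset.Icc 1 N).inf' (Finset.nonempty_Icc.mpr hN)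
    (fun i => quality m k (taskSlice S i))

/-! For `j ∉ S`, `k·m²·p^S(j)` is a sum over distance layers `v < m` of
`min k #{e ∈ S : |j - e| ≤ v}`, and for `j ∈ S` it is the maximal value `k·m`. Each layer
count is modular in `S`, and truncating a modular count at `k` makes it submodular, so
`p^S(j)` is non-decreasing and submodular in `S`. Since `p^S(j) ≤ 1/m ≤ 1/3 < 1/e`, these
values lie where `x ↦ -x log x` is concave and non-decreasing, and such a function preserves
both properties. Summing over slots and tasks gives the claim. -/

open Finset

theorem List.sum_add_sum_range_countP_le {m : ℕ} (l : List ℕ) (hl : ∀ x ∈ l, x < m) :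
    l.sum + ∑ v ∈ Finset.range m, l.countP (· ≤ v) = l.length * m := by
  induction l with
  | nil => simp
  | cons a l ih =>
    have ha : a < m := hl a List.mem_cons_self
    have hlayers : ∑ v ∈ Finset.range m, (if a ≤ v then 1 else 0) = m - a := by
      rw [sum_boole, Nat.cast_id,
        show {v ∈ Finset.range m | a ≤ v} = Finset.Ico a m by ext; simp; omega, Nat.card_Ico]
    have := ih fun x hx => hl x (List.mem_cons_of_mem a hx)
    simp only [List.sum_cons, List.countP_cons, sum_add_distrib, decide_eq_true_eq, hlayers,
      List.length_cons]
    rw [add_mul]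
    omega

theorem List.countP_take_of_pairwise_le (v : ℕ) {l : List ℕ} (hl : l.Pairwise (· ≤ ·)) (k : ℕ) :
    (l.take k).countP (· ≤ v) = min k (l.countP (· ≤ v)) := by
  induction l generalizing k with
  | nil => simp
  | cons a l ih =>
    rcases k with _ | k
    · simp
    obtain ⟨ha, hl⟩ := List.pairwise_cons.mp hl
    by_cases hav : a ≤ v
    · simp [List.take_succ_cons, hav, ih hl k]
    · have hnone : l.countP (· ≤ v) = 0 :=
        List.countP_eq_zero.mpr fun x hx => by simpa using (lt_of_not_ge hav).trans_le (ha x hx)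
      have hnone_take : (l.take k).countP (· ≤ v) = 0 := by
        have := (List.take_sublist k l).countP_le (p := (· ≤ v))
        omega
      simp [List.take_succ_cons, hav, hnone, hnone_take]

theorem card_filter_tdist_le_eq_countP_sort (S : Finset ℕ) (j v : ℕ) :
    #{e ∈ S | tdist j e ≤ v} =
      ((S.val.map (fun e => tdist j e)).sort (· ≤ ·)).countP (· ≤ v) := by
  rw [← Multiset.coe_countP, Multiset.sort_eq, Multiset.countP_map, card_def, filter_val]

/-- A neighbour at distance `d < m` is counted by the `m - d` layers `v ≥ d`, so each of the
`k` nearest neighbours contributes `m` to the left side; a missing one contributes `m` through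
the padding. -/
theorem Ik_add_sum_min_card_filter (m k : ℕ) {S : Finset ℕ} {j : ℕ}
    (hS : ∀ e ∈ S, tdist j e < m) :
    Ik m k S j + ∑ v ∈ range m, min k #{e ∈ S | tdist j e ≤ v} = k * m := by
  simp only [card_filter_tdist_le_eq_countP_sort, Ik]
  have hsum : (S.val.map (fun e => tdist j e)).sum =
      ((S.val.map (fun e => tdist j e)).sort (· ≤ ·)).sum := by
    rw [← Multiset.sum_coe, Multiset.sort_eq]
  rw [hsum]
  set l := (S.val.map (fun e => tdist j e)).sort (· ≤ ·)
  have hsorted : l.Pairwise (· ≤ ·) := Multiset.pairwise_sort _ _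
  have hlen : l.length = #S := by simp [l]
  have hl : ∀ x ∈ l, x < m := by
    intro x hx
    obtain ⟨e, he, rfl⟩ := Multiset.mem_map.mp ((Multiset.mem_sort _).mp hx)
    exact hS e he
  by_cases hk : k ≤ #S
  · have hlayers := List.sum_add_sum_range_countP_le (l.take k)
      fun x hx => hl x (List.mem_of_mem_take hx)
    simp only [List.countP_take_of_pairwise_le _ hsorted] at hlayers
    rw [if_pos hk, hlayers, List.length_take, hlen, min_eq_left hk]
  · have hlayers := List.sum_add_sum_range_countP_le l hl
    have hmin : ∀ v, min k (l.countP (· ≤ v)) = l.countP (· ≤ v) := fun v =>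
      min_eq_right ((List.countP_le_length).trans (by omega))
    simp only [if_neg hk, hmin]
    rw [hlen] at hlayers
    have : (k - #S) * m + #S * m = k * m := by rw [← add_mul, Nat.sub_add_cancel (by omega)]
    omega

theorem min_sum_inter_add_min_sum_union_le {α : Type*} [DecidableEq α] (k : ℕ) (w : α → ℕ)
    (X Y : Finset α) :
    min k (∑ e ∈ X ∩ Y, w e) + min k (∑ e ∈ X ∪ Y, w e) ≤
      min k (∑ e ∈ X, w e) + min k (∑ e ∈ Y, w e) := by
  have hmod := sum_union_inter (s₁ := X) (s₂ := Y) (f := w)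
  have hX := sum_le_sum_of_subset (f := w) (inter_subset_left (s₁ := X) (s₂ := Y))
  have hY := sum_le_sum_of_subset (f := w) (inter_subset_right (s₁ := X) (s₂ := Y))
  omega

/-- `k·m²·p^S(j)` as a natural number: layer `v < m` contributes the number of executed slots
within distance `v` of `j`, truncated at `k`; an executed `j` fills every layer on its own. -/
def probCount (m k : ℕ) (S : Finset ℕ) (j : ℕ) : ℕ :=
  ∑ v ∈ range m, min k (∑ e ∈ S, ((if tdist j e ≤ v then 1 else 0) + if e = j then k else 0))

theorem probCount_of_mem {m k : ℕ} {S : Finset ℕ} {j : ℕ} (hj : j ∈ S) :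
    probCount m k S j = k * m := by
  have hfull : ∀ v, k ≤ ∑ e ∈ S, ((if tdist j e ≤ v then 1 else 0) + if e = j then k else 0) :=
    fun v => le_trans (by simp) (single_le_sum (fun _ _ => Nat.zero_le _) hj)
  simp [probCount, min_eq_left (hfull _), mul_comm]

theorem probCount_of_notMem {m k : ℕ} {S : Finset ℕ} {j : ℕ} (hj : j ∉ S) :
    probCount m k S j = ∑ v ∈ range m, min k #{e ∈ S | tdist j e ≤ v} := by
  simp only [probCount, sum_add_distrib, sum_ite_eq', if_neg hj, add_zero, card_filter]

theorem probCount_le (m k : ℕ) (S : Finset ℕ) (j : ℕ) : probCount m k S j ≤ k * m :=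
  (sum_le_sum fun _ _ => min_le_left _ _).trans_eq (by simp [mul_comm])

theorem probCount_mono (m k : ℕ) {S T : Finset ℕ} (h : S ⊆ T) (j : ℕ) :
    probCount m k S j ≤ probCount m k T j :=
  sum_le_sum fun _ _ => min_le_min_left k (sum_le_sum_of_subset h)

theorem probCount_inter_add_probCount_union_le (m k : ℕ) (X Y : Finset ℕ) (j : ℕ) :
    probCount m k (X ∩ Y) j + probCount m k (X ∪ Y) j ≤
      probCount m k X j + probCount m k Y j := by
  simp only [probCount, ← sum_add_distrib]
  exact sum_le_sum fun _ _ => min_sum_inter_add_min_sum_union_le _ _ X Y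

theorem tdist_lt_of_mem_Icc {m j e : ℕ} (hj : j ∈ Icc 1 m) (he : e ∈ Icc 1 m) :
    tdist j e < m := by
  rw [mem_Icc] at hj he
  rw [tdist]
  omega

section Prob

variable {m k : ℕ} {j : ℕ}

theorem prob_eq_probCount_div (hk : 0 < k) {S : Finset ℕ} (hS : S ⊆ Icc 1 m)
    (hj : j ∈ Icc 1 m) : prob m k S j = probCount m k S j / (k * m * m) := by
  have hm₀ : (m : ℝ) ≠ 0 := by have := (mem_Icc.mp hj).1.trans (mem_Icc.mp hj).2; positivity
  have hk₀ : (k : ℝ) ≠ 0 := by positivity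
  by_cases hjS : j ∈ S
  · rw [prob, rho, if_pos hjS, probCount_of_mem hjS, sub_zero, Nat.cast_mul]
    field_simp
  · have hlayers := Ik_add_sum_min_card_filter m k fun e he => tdist_lt_of_mem_Icc hj (hS he)
    rw [← probCount_of_notMem hjS] at hlayers
    have hcount : (probCount m k S j : ℝ) = k * m - Ik m k S j := by
      rw [eq_sub_iff_add_eq', ← Nat.cast_add, hlayers, Nat.cast_mul]
    rw [prob, rho, if_neg hjS, hcount]
    field_simp

theorem prob_mem_Icc (hm : 3 ≤ m) (hk : 0 < k) {S : Finset ℕ} (hS : S ⊆ Icc 1 m)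
    (hj : j ∈ Icc 1 m) : prob m k S j ∈ Set.Icc 0 (Real.exp (-1)) := by
  rw [prob_eq_probCount_div hk hS hj]
  have hm₃ : (3 : ℝ) ≤ m := by exact_mod_cast hm
  have hcount : (probCount m k S j : ℝ) ≤ k * m := by exact_mod_cast probCount_le m k S j
  refine ⟨by positivity, ?_⟩
  calc (probCount m k S j : ℝ) / (k * m * m) ≤ k * m / (k * m * m) := by gcongr
    _ = 1 / m := by field_simp
    _ ≤ 1 / 3 := by gcongr
    _ ≤ Real.exp (-1) := by linarith [Real.exp_neg_one_gt_d9]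

theorem prob_mono (hk : 0 < k) {S T : Finset ℕ} (hT : T ⊆ Icc 1 m) (hST : S ⊆ T)
    (hj : j ∈ Icc 1 m) : prob m k S j ≤ prob m k T j := by
  rw [prob_eq_probCount_div hk (hST.trans hT) hj, prob_eq_probCount_div hk hT hj]
  gcongr
  exact probCount_mono m k hST j

theorem prob_inter_add_prob_union_le (hk : 0 < k) {X Y : Finset ℕ} (hX : X ⊆ Icc 1 m)
    (hY : Y ⊆ Icc 1 m) (hj : j ∈ Icc 1 m) :
    prob m k (X ∩ Y) j + prob m k (X ∪ Y) j ≤ prob m k X j + prob m k Y j := by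
  rw [prob_eq_probCount_div hk (inter_subset_left.trans hX) hj,
    prob_eq_probCount_div hk (union_subset hX hY) hj, prob_eq_probCount_div hk hX hj,
    prob_eq_probCount_div hk hY hj, ← add_div, ← add_div]
  exact div_le_div_of_nonneg_right
    (mod_cast probCount_inter_add_probCount_union_le m k X Y j) (by positivity)

end Prob

theorem ConcaveOn.add_le_add_of_add_eq {s : Set ℝ} {f : ℝ → ℝ} (hf : ConcaveOn ℝ s f)
    {a b c d : ℝ} (ha : a ∈ s) (hd : d ∈ s) (hab : a ≤ b) (hbd : b ≤ d) (h : a + d = b + c) :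
    f a + f d ≤ f b + f c := by
  rcases hab.trans hbd |>.eq_or_lt with had | had
  · rw [show b = a by linarith, show c = a by linarith, had]
  -- `b` and `c` are the convex combinations of `a` and `d` with swapped weights
  set t := (d - b) / (d - a) with ht
  have ht₀ : 0 ≤ t := div_nonneg (by linarith) (by linarith)
  have ht₁ : 0 ≤ 1 - t := by rw [sub_nonneg, div_le_one (by linarith)]; linarith
  have hb := hf.2 ha hd ht₀ ht₁ (by ring)
  have hc := hf.2 ha hd ht₁ ht₀ (by ring)
  simp only [smul_eq_mul] at hb hc
  rw [show t * a + (1 - t) * d = b by rw [ht]; field_simp; ring] at hb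
  rw [show (1 - t) * a + t * d = c by rw [ht]; field_simp; linear_combination (d - a) * h] at hc
  linarith

theorem ConcaveOn.add_le_add_of_add_le {s : Set ℝ} {f : ℝ → ℝ} (hf : ConcaveOn ℝ s f)
    (hf_mono : MonotoneOn f s) {a b c d : ℝ} (ha : a ∈ s) (hd : d ∈ s) (hbd : b ≤ d)
    (hcd : c ≤ d) (h : a + d ≤ b + c) : f a + f d ≤ f b + f c := by
  have ha' : b + c - d ∈ s :=
    (convex_iff_ordConnected.mp hf.1).out ha hd ⟨by linarith, by linarith⟩
  have := hf.add_le_add_of_add_eq (c := c) ha' hd (by linarith) hbd (by ring)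
  linarith [hf_mono ha ha' (by linarith)]

theorem Real.monotoneOn_negMulLog : MonotoneOn negMulLog (Set.Icc 0 (exp (-1))) := by
  refine monotoneOn_of_deriv_nonneg (convex_Icc _ _) continuous_negMulLog.continuousOn ?_ ?_ <;>
    rw [interior_Icc]
  · exact fun x hx => (differentiableAt_negMulLog_iff.mpr hx.1.ne').differentiableWithinAt
  · intro x hx
    rw [deriv_negMulLog hx.1.ne', sub_nonneg, le_neg, ← log_exp (-1)]
    exact log_le_log hx.1 hx.2.le

theorem Real.concaveOn_negMulLog_Icc : ConcaveOn ℝ (Set.Icc 0 (exp (-1))) negMulLog :=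
  concaveOn_negMulLog.subset Set.Icc_subset_Ici_self (convex_Icc _ _)

section Quality

variable {m k : ℕ}

theorem quality_eq_sum_negMulLog (S : Finset ℕ) :
    quality m k S = (∑ j ∈ Icc 1 m, Real.negMulLog (prob m k S j)) / Real.log 2 := by
  rw [quality, sum_div]
  exact sum_congr rfl fun j _ => by rw [Real.logb, Real.negMulLog]; ring

theorem quality_mono (hm : 3 ≤ m) (hk : 0 < k) {S T : Finset ℕ} (hT : T ⊆ Icc 1 m)
    (hST : S ⊆ T) : quality m k S ≤ quality m k T := by
  rw [quality_eq_sum_negMulLog, quality_eq_sum_negMulLog]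
  gcongr with j hj
  exact Real.monotoneOn_negMulLog (prob_mem_Icc hm hk (hST.trans hT) hj)
    (prob_mem_Icc hm hk hT hj) (prob_mono hk hT hST hj)

theorem quality_inter_add_quality_union_le (hm : 3 ≤ m) (hk : 0 < k) {X Y : Finset ℕ}
    (hX : X ⊆ Icc 1 m) (hY : Y ⊆ Icc 1 m) :
    quality m k (X ∩ Y) + quality m k (X ∪ Y) ≤ quality m k X + quality m k Y := by
  simp only [quality_eq_sum_negMulLog, ← add_div, ← sum_add_distrib]
  gcongr ?_ / _
  refine sum_le_sum fun j hj => ?_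
  have hXY : X ∪ Y ⊆ Icc 1 m := union_subset hX hY
  exact Real.concaveOn_negMulLog_Icc.add_le_add_of_add_le Real.monotoneOn_negMulLog
    (prob_mem_Icc hm hk (inter_subset_left.trans hX) hj) (prob_mem_Icc hm hk hXY hj)
    (prob_mono hk hXY subset_union_left hj)
    (prob_mono hk hXY subset_union_right hj) (prob_inter_add_prob_union_le hk hX hY hj)

end Quality

theorem mem_taskSlice {S : Finset (ℕ × ℕ)} {i j : ℕ} : j ∈ taskSlice S i ↔ (i, j) ∈ S := by
  simp [taskSlice]

theorem taskSlice_inter (X Y : Finset (ℕ × ℕ)) (i : ℕ) :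
    taskSlice (X ∩ Y) i = taskSlice X i ∩ taskSlice Y i := by
  ext j
  simp [mem_taskSlice]

theorem taskSlice_union (X Y : Finset (ℕ × ℕ)) (i : ℕ) :
    taskSlice (X ∪ Y) i = taskSlice X i ∪ taskSlice Y i := by
  ext j
  simp [mem_taskSlice]

theorem taskSlice_mono {S T : Finset (ℕ × ℕ)} (h : S ⊆ T) (i : ℕ) :
    taskSlice S i ⊆ taskSlice T i :=
  fun _ hj => mem_taskSlice.mpr (h (mem_taskSlice.mp hj))

theorem taskSlice_subset_Icc {m N : ℕ} {S : Finset (ℕ × ℕ)}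
    (h : S ⊆ Icc 1 N ×ˢ Icc 1 m) (i : ℕ) : taskSlice S i ⊆ Icc 1 m :=
  fun _ hj => (mem_product.mp (h (mem_taskSlice.mp hj))).2

theorem qsum_nondecreasing_submodular_general (m k N : ℕ) (hm : 3 ≤ m) (hk : 1 ≤ k) :
    (∀ S T : Finset (ℕ × ℕ), T ⊆ Finset.Icc 1 N ×ˢ Finset.Icc 1 m → S ⊆ T →
      qsum m k N S ≤ qsum m k N T) ∧
    (∀ X Y : Finset (ℕ × ℕ), X ⊆ Finset.Icc 1 N ×ˢ Finset.Icc 1 m →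
      Y ⊆ Finset.Icc 1 N ×ˢ Finset.Icc 1 m →
      qsum m k N (X ∩ Y) + qsum m k N (X ∪ Y) ≤ qsum m k N X + qsum m k N Y) := by
  refine ⟨fun S T hT hST => sum_le_sum fun i _ => ?_, fun X Y hX hY => ?_⟩
  · exact quality_mono hm hk (taskSlice_subset_Icc hT i) (taskSlice_mono hST i)
  · simp only [qsum, ← sum_add_distrib, taskSlice_inter, taskSlice_union]
    exact sum_le_sum fun i _ => quality_inter_add_quality_union_le hm hk
      (taskSlice_subset_Icc hX i) (taskSlice_subset_Icc hY i)

/-- If `m ≥ 3`, the summation quality is non-decreasing and submodular. -/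
theorem qsum_nondecreasing_submodular (m k N : ℕ) (hm : 3 ≤ m) (hk : 1 ≤ k)
    (hN : 1 ≤ N) :
    (∀ S T : Finset (ℕ × ℕ), T ⊆ Finset.Icc 1 N ×ˢ Finset.Icc 1 m → S ⊆ T →
      qsum m k N S ≤ qsum m k N T) ∧
    (∀ X Y : Finset (ℕ × ℕ), X ⊆ Finset.Icc 1 N ×ˢ Finset.Icc 1 m →
      Y ⊆ Finset.Icc 1 N ×ˢ Finset.Icc 1 m →
      qsum m k N (X ∩ Y) + qsum m k N (X ∪ Y) ≤ qsum m k N X + qsum m k N Y) :=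
  qsum_nondecreasing_submodular_general m k N hm hk
end

section
/- Lower bound on the error ratio after one tentative execution: let S ⊆ {1,…,m} be a finite set, and let e' and j be slots of {1,…,m} with e' ∉ S and j ∉ S ∪ {e'}. Then ρ^{S ∪ {e'}}(j) ≥ (I_{k−1}^S(j) + 1)/(k·m), i.e. executing any single additional slot can reduce the k-th nearest-neighbor distance of j to at most 1 while the (k−1) nearest executed subtasks of j in S contribute at least I_{k−1}^S(j). -/
theorem Multiset.sort_cons_eq_orderedInsert_s15 {α : Type*} (r : α → α → Prop) [DecidableRel r]
    [IsTrans α r] [Std.Antisymm r] [Std.Total r] (a : α) (s : Multiset α) :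
    (a ::ₘ s).sort r = (s.sort r).orderedInsert r a :=
  Quot.inductionOn s fun _ => by simp [List.mergeSort_eq_insertionSort]

theorem List.sum_take_add_le_sum_take_succ_orderedInsert {α : Type*} [AddCommMonoid α]
    [LinearOrder α] [IsOrderedAddMonoid α] {c d : α} (hd : c ≤ d) :
    ∀ {l : List α}, (∀ x ∈ l, c ≤ x) → ∀ k : ℕ,
      (l.take k).sum + c ≤ ((l.orderedInsert (· ≤ ·) d).take (k + 1)).sum
  | [], _, k => by simpa using hd
  | a :: l, hl, k => by
    rw [List.forall_mem_cons] at hl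
    rw [List.orderedInsert_cons]
    split_ifs with hda
    · rw [List.take_succ_cons, List.sum_cons, add_comm d]
      gcongr
    · cases k with
      | zero => simpa using hl.1
      | succ k =>
        rw [List.take_succ_cons, List.take_succ_cons, List.sum_cons, List.sum_cons, add_assoc]
        gcongr
        exact List.sum_take_add_le_sum_take_succ_orderedInsert hd hl.2 k

theorem one_le_tdist {j e : ℕ} (h : j ≠ e) : 1 ≤ tdist j e := by
  unfold tdist
  omega

theorem Ik_add_one_le_Ik_succ_insert (m k : ℕ) {S : Finset ℕ} {e j : ℕ} (heS : e ∉ S)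
    (hj : j ∉ insert e S) : Ik m k S j + 1 ≤ Ik m (k + 1) (insert e S) j := by
  obtain ⟨hje, hjS⟩ : j ≠ e ∧ j ∉ S := by simpa using hj
  have hdist : ∀ x ∈ S.val.map (tdist j), 1 ≤ x :=
    Multiset.forall_mem_map_iff.mpr fun e' he' => one_le_tdist (ne_of_mem_of_not_mem he' hjS).symm
  unfold Ik
  rw [Finset.card_insert_of_notMem heS, Finset.insert_val_of_notMem heS, Multiset.map_cons,
    Multiset.sort_cons_eq_orderedInsert_s15]
  split_ifs
  · exact List.sum_take_add_le_sum_take_succ_orderedInsert (one_le_tdist hje)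
      (fun x hx => hdist x ((Multiset.mem_sort _).mp hx)) k
  · omega
  · omega
  · rw [Multiset.sum_cons, Nat.add_sub_add_right]
    have := one_le_tdist hje
    omega

theorem rho_lower_bound_general (m k : ℕ) (hk : 1 ≤ k) (S : Finset ℕ) (e' : ℕ) (heS : e' ∉ S)
    (j : ℕ) (hjS : j ∉ S ∪ {e'}) :
    ((Ik m (k - 1) S j : ℝ) + 1) / ((k : ℝ) * (m : ℝ)) ≤
      rho m k (S ∪ {e'}) j := by
  rw [rho, if_neg hjS, Finset.union_singleton]
  rw [Finset.union_singleton] at hjS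
  obtain ⟨k, rfl⟩ : ∃ k', k = k' + 1 := ⟨k - 1, by omega⟩
  gcongr
  exact_mod_cast Ik_add_one_le_Ik_succ_insert m k heS hjS

/-- Lower bound on the error ratio after one tentative execution:
`ρ^{S ∪ {e'}}(j) ≥ (I_{k−1}^S(j) + 1)/(k·m)`. -/
theorem rho_lower_bound (m k : ℕ) (hm : 2 ≤ m) (hk : 1 ≤ k)
    (S : Finset ℕ) (hS : S ⊆ Finset.Icc 1 m)
    (e' : ℕ) (he' : e' ∈ Finset.Icc 1 m) (heS : e' ∉ S)
    (j : ℕ) (hj : j ∈ Finset.Icc 1 m) (hjS : j ∉ S ∪ {e'}) :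
    ((Ik m (k - 1) S j : ℝ) + 1) / ((k : ℝ) * (m : ℝ)) ≤
      rho m k (S ∪ {e'}) j :=
  rho_lower_bound_general m k hk S e' heS j hjS
end
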